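/- Let G be a compact Hausdorff abelian topological group. Then for every subgroup P ≤ Aut(G) (not necessarily closed), the topological semidirect product G ⋊ P is a minimal topological group. -/

import Mathlib

open scoped Topology

/-- The group of self-homeomorphisms of `X`, with composition as multiplication:
`(f * g) x = f (g x)`, identity `Homeomorph.refl` and inverse `Homeomorph.symm`. -/
instance homeoGroup (X : Type*) [TopologicalSpace X] : Group (X ≃ₜ X) where
  mul f g := g.trans f
  one := Homeomorph.refl X
  inv := Homeomorph.symm
  mul_assoc f g h := rfl
  one_mul f := rfl
  mul_one f := rfl
  inv_mul_cancel f := by ext x; exact f.symm_apply_apply x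

/-- The compact-open topology on the homeomorphism group `H(X)`, induced from the
compact-open topology on `C(X, X)`. -/
def coTop (X : Type*) [TopologicalSpace X] : TopologicalSpace (X ≃ₜ X) :=
  TopologicalSpace.induced (fun f : X ≃ₜ X => (f : C(X, X))) ContinuousMap.compactOpen

/-- The group `Aut(G)` of all topological group automorphisms of a topological group `G`
(group automorphisms that are homeomorphisms), as a subgroup of the homeomorphism
group of `G`. -/
def topAut (G : Type*) [Group G] [TopologicalSpace G] : Subgroup (G ≃ₜ G) where
  carrier := {f : G ≃ₜ G | ∀ a b : G, f (a * b) = f a * f b}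
  one_mem' := fun _ _ => rfl
  mul_mem' := by
    intro f g hf hg a b
    show f (g (a * b)) = f (g a) * f (g b)
    rw [hg, hf]
  inv_mem' := by
    intro f hf a b
    show f.symm (a * b) = f.symm a * f.symm b
    apply f.injective
    rw [hf]
    simp

/-- The compact-open topology on `Aut(G)`. -/
def autTop (G : Type*) [Group G] [TopologicalSpace G] : TopologicalSpace ↥(topAut G) :=
  TopologicalSpace.induced (Subtype.val : ↥(topAut G) → G ≃ₜ G) (coTop G)

/-- The tautological action of a subgroup `P ≤ Aut(G)` on `G`, as a homomorphism
`P →* MulAut G`. -/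
def actHom {G : Type*} [Group G] [TopologicalSpace G] (P : Subgroup ↥(topAut G)) :
    ↥P →* MulAut G where
  toFun p := MulEquiv.mk' p.1.1.toEquiv (fun a b => p.1.2 a b)
  map_one' := rfl
  map_mul' _ _ := rfl

/-- The topology on a subgroup `P ≤ Aut(G)`, inherited from the compact-open topology. -/
def subAutTop {G : Type*} [Group G] [TopologicalSpace G] (P : Subgroup ↥(topAut G)) :
    TopologicalSpace ↥P :=
  TopologicalSpace.induced (Subtype.val : ↥P → ↥(topAut G)) (autTop G)

/-- The product topology on the topological semidirect product `G ⋊ P`, whose underlying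
group is `SemidirectProduct G ↥P (actHom P)`, i.e. the multiplication is
`(g₁, p₁) * (g₂, p₂) = (g₁ * p₁ g₂, p₁ * p₂)`. -/
def sdpTop {G : Type*} [Group G] [TopologicalSpace G] (P : Subgroup ↥(topAut G)) :
    TopologicalSpace (G ⋊[actHom P] ↥P) :=
  TopologicalSpace.induced (fun x : G ⋊[actHom P] ↥P => (x.left, x.right))
    (@instTopologicalSpaceProd G ↥P _ (subAutTop P))

/-- A (Hausdorff) topological group `(G, τ)` is *minimal* if every Hausdorff group topology
on `G` coarser than `τ` equals `τ`. -/
def IsMinimalTopGroup (G : Type*) [Group G] (τ : TopologicalSpace G) : Prop :=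
  ∀ σ : TopologicalSpace G, τ ≤ σ → @IsTopologicalGroup G σ _ → @T2Space G σ → σ = τ

/-!
Let `σ` be a Hausdorff group topology on `G ⋊ P` coarser than the product topology. As `G` is
compact, `inl : G → G ⋊ P` is a closed embedding for `σ`. Since `G` is abelian, conjugation by
`m` acts on `inl G` through the automorphism `m.right`; joint continuity of conjugation thus makes
`(m, y) ↦ m.right y` continuous, and by the exponential law `m ↦ m.right` is `σ`-continuous into
the compact-open topology. Then `inl m.left = m * (inr m.right)⁻¹` shows that `m ↦ m.left` is
`σ`-continuous as well, so `σ` is finer than the product topology.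
-/

namespace SemidirectProduct

section Group

variable {N K : Type*} [Group N] [Group K] {φ : K →* MulAut N} [TopologicalSpace N]
  [TopologicalSpace (N ⋊[φ] K)] [IsTopologicalGroup (N ⋊[φ] K)]

theorem continuous_left_of_isInducing_inl (hinl : Topology.IsInducing (inl : N → N ⋊[φ] K))
    (hinr : Continuous fun m : N ⋊[φ] K => (inr m.right : N ⋊[φ] K)) :
    Continuous fun m : N ⋊[φ] K => m.left := by
  have hinl_left :
      (fun m : N ⋊[φ] K => (inl m.left : N ⋊[φ] K)) = fun m => m * (inr m.right)⁻¹ := by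
    funext m
    rw [eq_mul_inv_iff_mul_eq, inl_left_mul_inr_right]
  refine hinl.continuous_iff.2 ?_
  rw [Function.comp_def, hinl_left]
  exact continuous_id.mul hinr.inv

end Group

section CommGroup

variable {N K : Type*} [CommGroup N] [Group K] {φ : K →* MulAut N}

theorem mul_inl_mul_inv_of_comm (m : N ⋊[φ] K) (n : N) :
    m * inl n * m⁻¹ = inl (φ m.right n) := by
  ext <;> simp [mul_comm]

theorem continuous_action_of_isInducing_inl [TopologicalSpace N]
    [TopologicalSpace (N ⋊[φ] K)] [IsTopologicalGroup (N ⋊[φ] K)]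
    (hinl : Topology.IsInducing (inl : N → N ⋊[φ] K)) :
    Continuous fun p : (N ⋊[φ] K) × N => φ p.1.right p.2 := by
  refine hinl.continuous_iff.2 ?_
  simp only [Function.comp_def, ← mul_inl_mul_inv_of_comm]
  fun_prop

end CommGroup

end SemidirectProduct

section Aut

variable {G : Type*} [Group G] [TopologicalSpace G] (P : Subgroup ↥(topAut G))

theorem continuous_subAutTop_rng_iff {X : Type*} [TopologicalSpace X] {f : X → ↥P} :
    Continuous[_, subAutTop P] f ↔
      Continuous fun x => (((f x : ↥(topAut G)) : G ≃ₜ G) : C(G, G)) := by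
  rw [subAutTop, autTop, coTop, induced_compose, induced_compose]
  exact continuous_induced_rng

theorem continuous_sdpTop_rng_iff {X : Type*} [TopologicalSpace X] {f : X → G ⋊[actHom P] ↥P} :
    Continuous[_, sdpTop P] f ↔
      Continuous (fun x => (f x).left) ∧ Continuous[_, subAutTop P] fun x => (f x).right := by
  let _ := subAutTop P
  rw [sdpTop]
  exact continuous_induced_rng.trans continuous_prodMk

end Aut

open SemidirectProduct in
theorem semidirectProduct_minimal_of_comm (G : Type*)
    [CommGroup G] [TopologicalSpace G] [CompactSpace G]
    (P : Subgroup ↥(topAut G)) :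
    IsMinimalTopGroup (G ⋊[actHom P] ↥P) (sdpTop P) := by
  intro σ hle _ _
  let _ := subAutTop P
  have hinl : Topology.IsInducing (inl : G → G ⋊[actHom P] ↥P) := by
    have hinl_cont : Continuous[_, σ] (inl : G → G ⋊[actHom P] ↥P) :=
      continuous_le_rng hle ((continuous_sdpTop_rng_iff P).2 ⟨continuous_id, continuous_const⟩)
    exact (hinl_cont.isClosedEmbedding inl_injective).isInducing
  have hinr : Continuous[_, σ] (inr : ↥P → G ⋊[actHom P] ↥P) :=
    continuous_le_rng hle ((continuous_sdpTop_rng_iff P).2 ⟨continuous_const, continuous_id⟩)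
  have hright : Continuous fun m : G ⋊[actHom P] ↥P => m.right :=
    (continuous_subAutTop_rng_iff P).2 <|
      ContinuousMap.continuous_of_continuous_uncurry _ (continuous_action_of_isInducing_inl hinl)
  refine le_antisymm ?_ hle
  rw [← continuous_id_iff_le, continuous_sdpTop_rng_iff]
  exact ⟨continuous_left_of_isInducing_inl hinl (hinr.comp hright), hright⟩
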